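/- There exists a constant C, depending only on p, β⁻, β⁺ and b−a, such that for every v in the immersed trial space U_T the mapped test coefficient vector Π_h v satisfies ‖Π_h v‖_{T'} ≤ C ‖v‖₁, where ‖v‖²₁ = ∫_a^b (v′(x)² + v(x)²) dx. -/

import Mathlib

open Set

/-- The piecewise-constant diffusion coefficient with interface point `α`. -/
noncomputable def betaPW (βm βp α : ℝ) : ℝ → ℝ := fun t => if t < α then βm else βp

/-- Membership in the immersed trial space `U_T`: continuous on `[a,b]`, zero boundary
values, a polynomial of degree ≤ p on each non-interface element `[x_{i-1}, x_i]` (i ≠ k),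
and on the interface element `[x_{k-1}, x_k]` a continuous piecewise polynomial of degree ≤ p
satisfying the derivative jump conditions at the interface `α`. -/
def MemUT (p N k : ℕ) (a b α βm βp : ℝ) (x : ℕ → ℝ) (v : ℝ → ℝ) : Prop :=
  ContinuousOn v (Set.Icc a b) ∧ v a = 0 ∧ v b = 0 ∧
  (∀ i, 1 ≤ i → i ≤ N → i ≠ k → ∃ q : Polynomial ℝ, q.natDegree ≤ p ∧
    ∀ y ∈ Set.Icc (x (i - 1)) (x i), v y = q.eval y) ∧
  ∃ qm qp : Polynomial ℝ, qm.natDegree ≤ p ∧ qp.natDegree ≤ p ∧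
    (∀ y ∈ Set.Icc (x (k - 1)) α, v y = qm.eval y) ∧
    (∀ y ∈ Set.Icc α (x k), v y = qp.eval y) ∧
    ∀ j, 1 ≤ j → j ≤ p →
      βm * ((⇑Polynomial.derivative)^[j] qm).eval α
        = βp * ((⇑Polynomial.derivative)^[j] qp).eval α

/-- The previous value `v_{i,j-1}` of a test coefficient vector, with the conventions
`v_{1,0} = 0` and `v_{i,0} = v_{i-1,p}`. -/
noncomputable def vprev (p : ℕ) (w : ℕ → ℕ → ℝ) (i j : ℕ) : ℝ :=
  if j = 1 then (if i = 1 then 0 else w (i - 1) p) else w i (j - 1)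

/-- The jump `[v_{i,j}] = v_{i,j} − v_{i,j−1}` of a test coefficient vector. -/
noncomputable def jmp (p : ℕ) (w : ℕ → ℕ → ℝ) (i j : ℕ) : ℝ := w i j - vprev p w i j

/-- The squared norm `‖v‖²_{T'} = |v|²_{1,T'} + ‖v‖²_{0,T'}` on test coefficient vectors. -/
noncomputable def normTpSq (N p : ℕ) (x : ℕ → ℝ) (w : ℕ → ℕ → ℝ) : ℝ :=
  (∑ i ∈ Finset.Icc 1 N, ∑ j ∈ Finset.Icc 1 p, (x i - x (i - 1))⁻¹ * (jmp p w i j) ^ 2)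
    + ∑ i ∈ Finset.Icc 1 N, ∑ j ∈ Finset.Icc 1 (if i < N then p else p - 1),
        (x i - x (i - 1)) * (w i j) ^ 2

/-- The norm `‖v‖_{T'}` on test coefficient vectors. -/
noncomputable def normTp (N p : ℕ) (x : ℕ → ℝ) (w : ℕ → ℕ → ℝ) : ℝ :=
  Real.sqrt (normTpSq N p x w)

/-- The mapping `Π_h` from trial functions to test coefficient vectors: the entry `(i,j)`
is the partial (lexicographic) sum of `A_{m,n} β(g_{m,n}) v′(g_{m,n})`, so that
`[v_{i,j}] = A_{i,j} β(g_{i,j}) v′(g_{i,j})`, together with the convention `v_{N,p} = 0`. -/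
noncomputable def pih (N p : ℕ) (βm βp α : ℝ) (g A : ℕ → ℕ → ℝ) (v : ℝ → ℝ) :
    ℕ → ℕ → ℝ :=
  fun i j => if i = N ∧ j = p then 0 else
    (∑ m ∈ Finset.Icc 1 (i - 1), ∑ n ∈ Finset.Icc 1 p,
        A m n * (betaPW βm βp α (g m n) * deriv v (g m n)))
      + ∑ n ∈ Finset.Icc 1 j, A i n * (betaPW βm βp α (g i n) * deriv v (g i n))

open Polynomial MeasureTheory
open scoped Interval

/-! On each element the flux `β v′` is a single polynomial `P` of degree `≤ p - 1`: away from the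
interface because `v` is a polynomial there, and on the interface element because the jump
conditions say that `β⁻ (v⁻)′ - β⁺ (v⁺)′` vanishes at `α` to order `p`. The jumps of `Π_h v` are
therefore the quadrature terms `A_{i,j} P(g_{i,j})`, and exactness of the quadrature up to degree
`2p - 1` turns their sums into integrals:
`∑_j A_{i,j} P(g_{i,j}) = ∫ P/β = v(x_i) - v(x_{i-1})`, which telescopes to `v(b) - v(a) = 0`
(so the convention `v_{N,p} = 0` is automatic), `∑_j A_{i,j} P(g_{i,j})² = ∫ P²/β ≤ β_max ∫ v′²`,
and `∑_j A_{i,j} = ∫ 1/β ≤ h_i / β_min`. This bounds the jump part of `‖Π_h v‖_{T'}` termwise,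
and every entry of `Π_h v` by `∑ A |P(g)|`, which Cauchy–Schwarz bounds by
`((b - a) / β_min · β_max ∫ v′²)^{1/2}`. -/

theorem Polynomial.eq_zero_of_natDegree_le_of_iterate_derivative_eval_eq_zero
    {K : Type*} [Field K] [CharZero K] {r : K[X]} {a : K} {n : ℕ}
    (hdeg : r.natDegree ≤ n) (h : ∀ i ≤ n, (derivative^[i] r).eval a = 0) : r = 0 := by
  induction n generalizing r with
  | zero =>
    rw [eq_C_of_natDegree_le_zero hdeg] at h ⊢
    simpa using h 0 le_rfl
  | succ n ih =>
    have hr' : derivative r = 0 :=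
      ih ((natDegree_derivative_le r).trans (by omega)) fun i hi => by
        simpa only [← Function.iterate_succ_apply] using h (i + 1) (by omega)
    rw [eq_C_of_derivative_eq_zero hr'] at h ⊢
    simpa using h 0 (by omega)

theorem flux_eq_of_jump {p : ℕ} (hp : 1 ≤ p) {βm βp α : ℝ} {qm qp : ℝ[X]}
    (hqm : qm.natDegree ≤ p) (hqp : qp.natDegree ≤ p)
    (hjump : ∀ j, 1 ≤ j → j ≤ p →
      βm * (derivative^[j] qm).eval α = βp * (derivative^[j] qp).eval α) :
    C βm * derivative qm = C βp * derivative qp := by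
  rw [← sub_eq_zero]
  refine eq_zero_of_natDegree_le_of_iterate_derivative_eval_eq_zero (a := α) (n := p - 1) ?_
    fun i hi => ?_
  · refine (natDegree_sub_le _ _).trans (max_le ?_ ?_) <;>
      refine (natDegree_C_mul_le _ _).trans ((natDegree_derivative_le _).trans ?_) <;> omega
  · simp only [iterate_derivative_sub, iterate_derivative_C_mul, ← Function.iterate_succ_apply,
      eval_sub, eval_mul, eval_C, hjump (i + 1) (by omega) (by omega), sub_self]

section betaPW

variable {βm βp α : ℝ}

theorem betaPW_of_lt {t : ℝ} (h : t < α) : betaPW βm βp α t = βm := if_pos h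

theorem betaPW_of_ge {t : ℝ} (h : α ≤ t) : betaPW βm βp α t = βp := if_neg h.not_gt

theorem betaPW_pos (hβm : 0 < βm) (hβp : 0 < βp) (t : ℝ) : 0 < betaPW βm βp α t := by
  unfold betaPW; split_ifs <;> assumption

theorem min_le_betaPW (t : ℝ) : min βm βp ≤ betaPW βm βp α t := by
  unfold betaPW; split_ifs <;> simp

theorem betaPW_le_max (t : ℝ) : betaPW βm βp α t ≤ max βm βp := by
  unfold betaPW; split_ifs <;> simp

theorem intervalIntegrable_comp_betaPW {f : ℝ → ℝ → ℝ} (hf : ∀ c, Continuous fun t => f t c)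
    (u w : ℝ) : IntervalIntegrable (fun t => f t (betaPW βm βp α t)) volume u w := by
  classical
  have hpw : (fun t => f t (betaPW βm βp α t)) = (Iio α).piecewise (f · βm) (f · βp) := by
    ext t; by_cases ht : t < α <;> simp [betaPW, Set.piecewise, ht]
  rw [hpw, intervalIntegrable_iff]
  exact Integrable.piecewise measurableSet_Iio
    ((hf βm).intervalIntegrable u w).def'.integrableOn
    ((hf βp).intervalIntegrable u w).def'.integrableOn

theorem integral_one_div_betaPW_le (hβm : 0 < βm) (hβp : 0 < βp) {u w : ℝ} (huw : u ≤ w) :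
    ∫ t in u..w, 1 / betaPW βm βp α t ≤ (min βm βp)⁻¹ * (w - u) := by
  calc ∫ t in u..w, 1 / betaPW βm βp α t ≤ ∫ _ in u..w, (min βm βp)⁻¹ :=
        intervalIntegral.integral_mono_on huw
          (intervalIntegrable_comp_betaPW (f := fun _ c => 1 / c) (fun _ => continuous_const)
            _ _) intervalIntegrable_const fun t _ => by
          rw [one_div]
          exact inv_anti₀ (lt_min hβm hβp) (min_le_betaPW t)
    _ = (min βm βp)⁻¹ * (w - u) := by
        rw [intervalIntegral.integral_const, smul_eq_mul, mul_comm]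

end betaPW

def IsFluxOn (βm βp α : ℝ) (v : ℝ → ℝ) (P : ℝ[X]) (u w : ℝ) : Prop :=
  ∀ t ∈ Ioo u w, t ≠ α → HasDerivAt v (P.eval t / betaPW βm βp α t) t

namespace IsFluxOn

variable {βm βp α u w : ℝ} {v : ℝ → ℝ} {P : ℝ[X]}

theorem of_eqOn_Icc {c : ℝ} {q : ℝ[X]} (hc : c ≠ 0)
    (hβ : ∀ t ∈ Ioo u w, betaPW βm βp α t = c) (hv : ∀ y ∈ Icc u w, v y = q.eval y) :
    IsFluxOn βm βp α v (C c * derivative q) u w := by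
  intro t ht _
  have hvq : (fun y => q.eval y) =ᶠ[nhds t] v :=
    Filter.eventuallyEq_of_mem (isOpen_Ioo.mem_nhds ht) fun y hy =>
      (hv y (Ioo_subset_Icc_self hy)).symm
  rw [hβ t ht, eval_mul, eval_C, mul_div_cancel_left₀ _ hc]
  exact (q.hasDerivAt t).congr_of_eventuallyEq hvq.symm

theorem union (hl : IsFluxOn βm βp α v P u α) (hr : IsFluxOn βm βp α v P α w) :
    IsFluxOn βm βp α v P u w := by
  intro t ht htα
  rcases htα.lt_or_gt with h | h
  · exact hl t ⟨ht.1, h⟩ h.ne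
  · exact hr t ⟨h, ht.2⟩ h.ne'

theorem betaPW_mul_deriv (hβm : 0 < βm) (hβp : 0 < βp) (h : IsFluxOn βm βp α v P u w)
    {t : ℝ} (ht : t ∈ Ioo u w) (htα : t ≠ α) :
    betaPW βm βp α t * deriv v t = P.eval t := by
  rw [(h t ht htα).deriv, mul_div_cancel₀ _ (betaPW_pos hβm hβp t).ne']

theorem integral_div_betaPW (huw : u ≤ w) (hv : ContinuousOn v (Icc u w))
    (h : IsFluxOn βm βp α v P u w) :
    ∫ t in u..w, P.eval t / betaPW βm βp α t = v w - v u :=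
  integral_eq_of_hasDerivAt_off_countable_of_le _ _ huw (countable_singleton α) hv
    (fun t ht => h t ht.1 ht.2)
    (intervalIntegrable_comp_betaPW (fun c => P.continuous.div_const c) _ _)

theorem deriv_ae_eq (huw : u ≤ w) (h : IsFluxOn βm βp α v P u w) :
    deriv v =ᵐ[volume.restrict (Ι u w)] fun t => P.eval t / betaPW βm βp α t := by
  rw [Filter.EventuallyEq, ae_restrict_iff' measurableSet_uIoc, uIoc_of_le huw]
  filter_upwards [((countable_singleton w).insert α).ae_notMem volume] with t hne ht
  simp only [mem_insert_iff, mem_singleton_iff, not_or] at hne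
  exact (h t ⟨ht.1, ht.2.lt_of_ne hne.2⟩ hne.1).deriv

theorem intervalIntegrable_deriv_sq (huw : u ≤ w) (h : IsFluxOn βm βp α v P u w) :
    IntervalIntegrable (fun t => deriv v t ^ 2) volume u w :=
  (intervalIntegrable_comp_betaPW (f := fun t c => (P.eval t / c) ^ 2)
    (fun c => (P.continuous.div_const c).pow 2) _ _).congr_ae
    ((h.deriv_ae_eq huw).fun_comp (· ^ 2)).symm

theorem integral_sq_div_betaPW_le (hβm : 0 < βm) (hβp : 0 < βp) (huw : u ≤ w)
    (h : IsFluxOn βm βp α v P u w) :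
    ∫ t in u..w, P.eval t ^ 2 / betaPW βm βp α t ≤ max βm βp * ∫ t in u..w, deriv v t ^ 2 := by
  have hpt : ∀ t, P.eval t ^ 2 / betaPW βm βp α t
      ≤ max βm βp * (P.eval t / betaPW βm βp α t) ^ 2 := by
    intro t
    have hβ := betaPW_pos (α := α) hβm hβp t
    calc P.eval t ^ 2 / betaPW βm βp α t
        = betaPW βm βp α t * (P.eval t / betaPW βm βp α t) ^ 2 := by field_simp
      _ ≤ max βm βp * (P.eval t / betaPW βm βp α t) ^ 2 :=
        mul_le_mul_of_nonneg_right (betaPW_le_max t) (sq_nonneg _)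
  calc ∫ t in u..w, P.eval t ^ 2 / betaPW βm βp α t
      ≤ ∫ t in u..w, max βm βp * (P.eval t / betaPW βm βp α t) ^ 2 :=
        intervalIntegral.integral_mono_on huw
          (intervalIntegrable_comp_betaPW (fun c => (P.continuous.pow 2).div_const c) _ _)
          (intervalIntegrable_comp_betaPW (f := fun t c => max βm βp * (P.eval t / c) ^ 2)
            (fun c => continuous_const.mul ((P.continuous.div_const c).pow 2)) _ _)
          fun t _ => hpt t
    _ = max βm βp * ∫ t in u..w, deriv v t ^ 2 := by
        rw [intervalIntegral.integral_const_mul]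
        congr 1
        exact intervalIntegral.integral_congr_ae_restrict
          ((h.deriv_ae_eq huw).fun_comp (· ^ 2)).symm

end IsFluxOn

theorem MemUT.exists_flux {p N k : ℕ} {a b α βm βp : ℝ} {x : ℕ → ℝ} {v : ℝ → ℝ}
    (hv : MemUT p N k a b α βm βp x v) (hp : 1 ≤ p) (hβm : βm ≠ 0) (hβp : βp ≠ 0)
    (hx : StrictMonoOn x (Iic N)) (hkN : k ≤ N) (hαl : x (k - 1) < α) (hαr : α < x k)
    {m : ℕ} (hm : m ∈ Finset.Icc 1 N) :
    ∃ P : ℝ[X], P.natDegree ≤ p - 1 ∧ IsFluxOn βm βp α v P (x (m - 1)) (x m) := by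
  obtain ⟨-, -, -, hpoly, qm, qp, hqm, hqp, hvm, hvp, hjump⟩ := hv
  obtain ⟨hm1, hmN⟩ := Finset.mem_Icc.mp hm
  have hdeg : ∀ c (q : ℝ[X]), q.natDegree ≤ p → (C c * derivative q).natDegree ≤ p - 1 :=
    fun c q hq => (natDegree_C_mul_le _ _).trans ((natDegree_derivative_le q).trans (by omega))
  rcases lt_trichotomy m k with hmk | rfl | hmk
  · obtain ⟨q, hq, hvq⟩ := hpoly m hm1 hmN hmk.ne
    have hxm : x m ≤ x (k - 1) := hx.monotoneOn (by simp; omega) (by simp; omega) (by omega)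
    exact ⟨_, hdeg βm q hq,
      IsFluxOn.of_eqOn_Icc hβm (fun t ht => betaPW_of_lt (by linarith [ht.2])) hvq⟩
  · refine ⟨_, hdeg βm qm hqm,
      (IsFluxOn.of_eqOn_Icc hβm (fun t ht => betaPW_of_lt ht.2) hvm).union ?_⟩
    rw [flux_eq_of_jump hp hqm hqp hjump]
    exact IsFluxOn.of_eqOn_Icc hβp (fun t ht => betaPW_of_ge ht.1.le) hvp
  · obtain ⟨q, hq, hvq⟩ := hpoly m hm1 hmN hmk.ne'
    have hxm : x k ≤ x (m - 1) := hx.monotoneOn (by simp; omega) (by simp; omega) (by omega)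
    exact ⟨_, hdeg βp q hq,
      IsFluxOn.of_eqOn_Icc hβp (fun t ht => betaPW_of_ge (by linarith [ht.1])) hvq⟩

section Quadrature

variable {p : ℕ} {βm βp α u w : ℝ} {A g : ℕ → ℝ}

theorem sum_weights_le (hβm : 0 < βm) (hβp : 0 < βp) (huw : u ≤ w)
    (hquad : ∀ F : ℝ[X], F.natDegree ≤ 2 * p - 1 →
      ∑ j ∈ Finset.Icc 1 p, A j * F.eval (g j) = ∫ t in u..w, F.eval t / betaPW βm βp α t) :
    ∑ j ∈ Finset.Icc 1 p, A j ≤ (min βm βp)⁻¹ * (w - u) := by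
  have h1 := hquad 1 (by simp)
  simp only [eval_one, mul_one] at h1
  exact h1 ▸ integral_one_div_betaPW_le hβm hβp huw

variable {v : ℝ → ℝ} {P : ℝ[X]}

theorem sum_mul_flux_eq (hβm : 0 < βm) (hβp : 0 < βp) (huw : u ≤ w)
    (hv : ContinuousOn v (Icc u w)) (hP : IsFluxOn βm βp α v P u w) (hdeg : P.natDegree ≤ p - 1)
    (hg : ∀ j ∈ Finset.Icc 1 p, u < g j ∧ g j < w ∧ g j ≠ α)
    (hquad : ∀ F : ℝ[X], F.natDegree ≤ 2 * p - 1 →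
      ∑ j ∈ Finset.Icc 1 p, A j * F.eval (g j) = ∫ t in u..w, F.eval t / betaPW βm βp α t) :
    ∑ j ∈ Finset.Icc 1 p, A j * (betaPW βm βp α (g j) * deriv v (g j)) = v w - v u := by
  rw [Finset.sum_congr rfl fun j hj => by
      rw [hP.betaPW_mul_deriv hβm hβp ⟨(hg j hj).1, (hg j hj).2.1⟩ (hg j hj).2.2],
    hquad P (by omega), hP.integral_div_betaPW huw hv]

theorem sum_mul_flux_sq_le (hβm : 0 < βm) (hβp : 0 < βp) (huw : u ≤ w)
    (hP : IsFluxOn βm βp α v P u w) (hdeg : P.natDegree ≤ p - 1)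
    (hg : ∀ j ∈ Finset.Icc 1 p, u < g j ∧ g j < w ∧ g j ≠ α)
    (hquad : ∀ F : ℝ[X], F.natDegree ≤ 2 * p - 1 →
      ∑ j ∈ Finset.Icc 1 p, A j * F.eval (g j) = ∫ t in u..w, F.eval t / betaPW βm βp α t) :
    ∑ j ∈ Finset.Icc 1 p, A j * (betaPW βm βp α (g j) * deriv v (g j)) ^ 2
      ≤ max βm βp * ∫ t in u..w, deriv v t ^ 2 := by
  calc ∑ j ∈ Finset.Icc 1 p, A j * (betaPW βm βp α (g j) * deriv v (g j)) ^ 2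
      = ∑ j ∈ Finset.Icc 1 p, A j * (P ^ 2).eval (g j) := Finset.sum_congr rfl fun j hj => by
        rw [hP.betaPW_mul_deriv hβm hβp ⟨(hg j hj).1, (hg j hj).2.1⟩ (hg j hj).2.2, eval_pow]
    _ = ∫ t in u..w, (P ^ 2).eval t / betaPW βm βp α t :=
        hquad _ (natDegree_pow_le.trans (by omega))
    _ ≤ max βm βp * ∫ t in u..w, deriv v t ^ 2 := by
        simpa only [eval_pow] using hP.integral_sq_div_betaPW_le hβm hβp huw

end Quadrature

theorem Finset.sum_Icc_one_eq_sum_range {M : Type*} [AddCommMonoid M] (f : ℕ → M) (N : ℕ) :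
    ∑ i ∈ Finset.Icc 1 N, f i = ∑ i ∈ Finset.range N, f (i + 1) := by
  induction N with
  | zero => simp
  | succ N ih => rw [Finset.sum_Icc_succ_top (by omega), ih, Finset.sum_range_succ]

theorem Finset.sum_Icc_one_sub_pred (f : ℕ → ℝ) (N : ℕ) :
    ∑ i ∈ Finset.Icc 1 N, (f i - f (i - 1)) = f N - f 0 := by
  simpa [Finset.sum_Icc_one_eq_sum_range] using Finset.sum_range_sub f N

section Partition

variable {N : ℕ} {x : ℕ → ℝ}

theorem StrictMonoOn.sub_one_lt (hx : StrictMonoOn x (Iic N)) {m : ℕ}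
    (hm : m ∈ Finset.Icc 1 N) : x (m - 1) < x m := by
  simp only [Finset.mem_Icc] at hm
  exact hx (by simp; omega) (by simp; omega) (by omega)

theorem MonotoneOn.Icc_sub_one_subset (hx : MonotoneOn x (Iic N)) {m : ℕ}
    (hm : m ∈ Finset.Icc 1 N) : Icc (x (m - 1)) (x m) ⊆ Icc (x 0) (x N) := by
  simp only [Finset.mem_Icc] at hm
  exact Icc_subset_Icc (hx (by simp) (by simp; omega) (by omega))
    (hx (by simp; omega) (by simp) hm.2)

theorem sum_integral_le_integral_add_sq {f v : ℝ → ℝ} (hN : x 0 ≤ x N)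
    (hf : ∀ m ∈ Finset.Icc 1 N, IntervalIntegrable f volume (x (m - 1)) (x m))
    (hv : ContinuousOn v (Icc (x 0) (x N))) :
    ∑ m ∈ Finset.Icc 1 N, ∫ t in x (m - 1)..x m, f t ≤ ∫ t in x 0..x N, (f t + v t ^ 2) := by
  have hf' : IntervalIntegrable f volume (x 0) (x N) :=
    IntervalIntegrable.trans_iterate fun k hk => by simpa using hf (k + 1) (by simp; omega)
  simp only [Finset.sum_Icc_one_eq_sum_range, Nat.add_sub_cancel]
  rw [intervalIntegral.sum_integral_adjacent_intervals
    fun k hk => by simpa using hf (k + 1) (by simp; omega)]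
  exact intervalIntegral.integral_mono_on hN hf' (hf'.add ((hv.pow 2).intervalIntegrable_of_Icc hN))
    fun t _ => le_add_of_nonneg_right (sq_nonneg _)

end Partition

/-- `Π_h v` without the convention `v_{N,p} = 0`. -/
def prefixSum (p : ℕ) (c : ℕ → ℕ → ℝ) (i j : ℕ) : ℝ :=
  (∑ m ∈ Finset.Icc 1 (i - 1), ∑ n ∈ Finset.Icc 1 p, c m n) + ∑ n ∈ Finset.Icc 1 j, c i n

section prefixSum

variable {p : ℕ} {c : ℕ → ℕ → ℝ} {i j : ℕ}

theorem prefixSum_zero :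
    prefixSum p c i 0 = ∑ m ∈ Finset.Icc 1 (i - 1), ∑ n ∈ Finset.Icc 1 p, c m n := by
  simp [prefixSum]

theorem prefixSum_succ : prefixSum p c i (j + 1) = prefixSum p c i j + c i (j + 1) := by
  rw [prefixSum, prefixSum, Finset.sum_Icc_succ_top (by omega), add_assoc]

theorem prefixSum_self (hi : 1 ≤ i) :
    prefixSum p c i p = ∑ m ∈ Finset.Icc 1 i, ∑ n ∈ Finset.Icc 1 p, c m n := by
  obtain ⟨i, rfl⟩ := Nat.exists_eq_add_of_le' hi
  rw [prefixSum, Finset.sum_Icc_succ_top (by omega), Nat.add_sub_cancel]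

theorem vprev_prefixSum (hi : 1 ≤ i) (hj : 1 ≤ j) :
    vprev p (prefixSum p c) i j = prefixSum p c i (j - 1) := by
  unfold vprev
  split_ifs with hj1 hi1
  · subst hj1 hi1; simp [prefixSum]
  · subst hj1; rw [prefixSum_self (by omega), Nat.sub_self, prefixSum_zero]
  · rfl

theorem jmp_prefixSum (hi : 1 ≤ i) (hj : 1 ≤ j) : jmp p (prefixSum p c) i j = c i j := by
  obtain ⟨j, rfl⟩ := Nat.exists_eq_add_of_le' hj
  rw [jmp, vprev_prefixSum hi hj, Nat.add_sub_cancel, prefixSum_succ, add_sub_cancel_left]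

theorem abs_prefixSum_le {N : ℕ} (hi : i ∈ Finset.Icc 1 N) (hj : j ≤ p) :
    |prefixSum p c i j| ≤ ∑ m ∈ Finset.Icc 1 N, ∑ n ∈ Finset.Icc 1 p, |c m n| := by
  obtain ⟨hi1, hiN⟩ := Finset.mem_Icc.mp hi
  calc |prefixSum p c i j| ≤ prefixSum p (fun m n => |c m n|) i j :=
        (abs_add_le _ _).trans (add_le_add
          ((Finset.abs_sum_le_sum_abs _ _).trans
            (Finset.sum_le_sum fun _ _ => Finset.abs_sum_le_sum_abs _ _))
          (Finset.abs_sum_le_sum_abs _ _))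
    _ ≤ prefixSum p (fun m n => |c m n|) i p :=
        add_le_add le_rfl (Finset.sum_le_sum_of_subset_of_nonneg (Finset.Icc_subset_Icc_right hj)
          fun _ _ _ => abs_nonneg _)
    _ ≤ ∑ m ∈ Finset.Icc 1 N, ∑ n ∈ Finset.Icc 1 p, |c m n| := by
        rw [prefixSum_self hi1]
        exact Finset.sum_le_sum_of_subset_of_nonneg (Finset.Icc_subset_Icc_right hiN)
          fun _ _ _ => Finset.sum_nonneg fun _ _ => abs_nonneg _

end prefixSum

theorem pih_eq_prefixSum {N p : ℕ} {βm βp α : ℝ} {g A : ℕ → ℕ → ℝ} {v : ℝ → ℝ} (hN : 1 ≤ N)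
    (htotal : ∑ m ∈ Finset.Icc 1 N, ∑ n ∈ Finset.Icc 1 p,
      A m n * (betaPW βm βp α (g m n) * deriv v (g m n)) = 0) :
    pih N p βm βp α g A v
      = prefixSum p fun m n => A m n * (betaPW βm βp α (g m n) * deriv v (g m n)) := by
  ext i j
  unfold pih
  split_ifs with h
  · rw [h.1, h.2, prefixSum_self hN, htotal]
  · rfl

theorem sq_sum_sum_abs_mul_le {s t : Finset ℕ} {A y : ℕ → ℕ → ℝ}
    (hA : ∀ i ∈ s, ∀ j ∈ t, 0 ≤ A i j) :
    (∑ i ∈ s, ∑ j ∈ t, |A i j * y i j|) ^ 2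
      ≤ (∑ i ∈ s, ∑ j ∈ t, A i j) * ∑ i ∈ s, ∑ j ∈ t, A i j * y i j ^ 2 := by
  simp only [← Finset.sum_product']
  refine Finset.sum_sq_le_sum_mul_sum_of_sq_le_mul _ (fun q hq => ?_) (fun q hq => ?_)
    fun q _ => by rw [sq_abs]; exact le_of_eq (by ring)
  · exact hA q.1 (Finset.mem_product.mp hq).1 q.2 (Finset.mem_product.mp hq).2
  · exact mul_nonneg (hA q.1 (Finset.mem_product.mp hq).1 q.2 (Finset.mem_product.mp hq).2)
      (sq_nonneg _)

section Estimates

variable {N p : ℕ} {x : ℕ → ℝ}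

theorem sum_inv_mul_jmp_sq_le {A y : ℕ → ℕ → ℝ} {κ : ℝ}
    (hx : ∀ i ∈ Finset.Icc 1 N, x (i - 1) < x i)
    (hA : ∀ i ∈ Finset.Icc 1 N, ∀ j ∈ Finset.Icc 1 p, 0 ≤ A i j)
    (hAsum : ∀ i ∈ Finset.Icc 1 N, ∑ j ∈ Finset.Icc 1 p, A i j ≤ κ * (x i - x (i - 1))) :
    ∑ i ∈ Finset.Icc 1 N, ∑ j ∈ Finset.Icc 1 p,
        (x i - x (i - 1))⁻¹ * jmp p (prefixSum p fun i j => A i j * y i j) i j ^ 2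
      ≤ κ * ∑ i ∈ Finset.Icc 1 N, ∑ j ∈ Finset.Icc 1 p, A i j * y i j ^ 2 := by
  simp only [Finset.mul_sum]
  refine Finset.sum_le_sum fun i hi => Finset.sum_le_sum fun j hj => ?_
  have hh : 0 < x i - x (i - 1) := sub_pos.mpr (hx i hi)
  have hAj : A i j ≤ κ * (x i - x (i - 1)) :=
    (Finset.single_le_sum (fun n hn => hA i hi n hn) hj).trans (hAsum i hi)
  rw [jmp_prefixSum (Finset.mem_Icc.mp hi).1 (Finset.mem_Icc.mp hj).1]
  calc (x i - x (i - 1))⁻¹ * (A i j * y i j) ^ 2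
      = ((x i - x (i - 1))⁻¹ * A i j) * (A i j * y i j ^ 2) := by ring
    _ ≤ κ * (A i j * y i j ^ 2) :=
      mul_le_mul_of_nonneg_right ((inv_mul_le_iff₀ hh).mpr (by linarith))
        (mul_nonneg (hA i hi j hj) (sq_nonneg _))

theorem sum_mul_prefixSum_sq_le (c : ℕ → ℕ → ℝ) (hx : ∀ i ∈ Finset.Icc 1 N, x (i - 1) ≤ x i) :
    ∑ i ∈ Finset.Icc 1 N, ∑ j ∈ Finset.Icc 1 (if i < N then p else p - 1),
        (x i - x (i - 1)) * prefixSum p c i j ^ 2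
      ≤ p * (x N - x 0) * (∑ m ∈ Finset.Icc 1 N, ∑ n ∈ Finset.Icc 1 p, |c m n|) ^ 2 := by
  set L := ∑ m ∈ Finset.Icc 1 N, ∑ n ∈ Finset.Icc 1 p, |c m n|
  calc _ ≤ ∑ i ∈ Finset.Icc 1 N, p * ((x i - x (i - 1)) * L ^ 2) := by
        refine Finset.sum_le_sum fun i hi => ?_
        have hh : 0 ≤ x i - x (i - 1) := sub_nonneg.mpr (hx i hi)
        have hcard : (Finset.Icc 1 (if i < N then p else p - 1)).card ≤ p := by
          rw [Nat.card_Icc]; split_ifs <;> omega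
        refine (Finset.sum_le_card_nsmul _ _ ((x i - x (i - 1)) * L ^ 2) fun j hj => ?_).trans ?_
        · have hjp : j ≤ p := by
            have := (Finset.mem_Icc.mp hj).2; split_ifs at this <;> omega
          have hb := abs_le.mp (abs_prefixSum_le (c := c) hi hjp)
          exact mul_le_mul_of_nonneg_left (sq_le_sq' hb.1 hb.2) hh
        · rw [nsmul_eq_mul]
          exact mul_le_mul_of_nonneg_right (by exact_mod_cast hcard)
            (mul_nonneg hh (sq_nonneg _))
    _ = p * (x N - x 0) * L ^ 2 := by
        rw [← Finset.mul_sum, ← Finset.sum_mul, Finset.sum_Icc_one_sub_pred]; ring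

theorem normTpSq_prefixSum_le {A y : ℕ → ℕ → ℝ} {κ : ℝ}
    (hx : ∀ i ∈ Finset.Icc 1 N, x (i - 1) < x i)
    (hA : ∀ i ∈ Finset.Icc 1 N, ∀ j ∈ Finset.Icc 1 p, 0 ≤ A i j)
    (hAsum : ∀ i ∈ Finset.Icc 1 N, ∑ j ∈ Finset.Icc 1 p, A i j ≤ κ * (x i - x (i - 1))) :
    normTpSq N p x (prefixSum p fun i j => A i j * y i j)
      ≤ κ * (1 + p * (x N - x 0) ^ 2)
        * ∑ i ∈ Finset.Icc 1 N, ∑ j ∈ Finset.Icc 1 p, A i j * y i j ^ 2 := by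
  set S := ∑ i ∈ Finset.Icc 1 N, ∑ j ∈ Finset.Icc 1 p, A i j * y i j ^ 2
  have hS : 0 ≤ S := Finset.sum_nonneg fun i hi => Finset.sum_nonneg fun j hj =>
    mul_nonneg (hA i hi j hj) (sq_nonneg _)
  have hlen : 0 ≤ x N - x 0 := by
    rw [← Finset.sum_Icc_one_sub_pred]
    exact Finset.sum_nonneg fun i hi => sub_nonneg.mpr (hx i hi).le
  have hAtot : ∑ i ∈ Finset.Icc 1 N, ∑ j ∈ Finset.Icc 1 p, A i j ≤ κ * (x N - x 0) := by
    rw [← Finset.sum_Icc_one_sub_pred, Finset.mul_sum]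
    exact Finset.sum_le_sum hAsum
  have hL := (sq_sum_sum_abs_mul_le (y := y) hA).trans (mul_le_mul_of_nonneg_right hAtot hS)
  calc normTpSq N p x (prefixSum p fun i j => A i j * y i j)
      ≤ κ * S + p * (x N - x 0)
          * (∑ i ∈ Finset.Icc 1 N, ∑ j ∈ Finset.Icc 1 p, |A i j * y i j|) ^ 2 :=
        add_le_add (sum_inv_mul_jmp_sq_le hx hA hAsum)
          (sum_mul_prefixSum_sq_le _ fun i hi => (hx i hi).le)
    _ ≤ κ * S + p * (x N - x 0) * (κ * (x N - x 0) * S) := by gcongr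
    _ = κ * (1 + p * (x N - x 0) ^ 2) * S := by ring

end Estimates

theorem stmt_8_general (p : ℕ) (hp : 1 ≤ p) (βm βp d : ℝ)
    (hβm : 0 < βm) (hβp : 0 < βp) :
    ∃ C : ℝ, 0 < C ∧
    (∀ (N k : ℕ) (a b α : ℝ) (x : ℕ → ℝ) (g A : ℕ → ℕ → ℝ),
    b - a = d →
    1 ≤ N →
    1 ≤ k →
    k ≤ N →
    a < b →
    x 0 = a →
    x N = b →
    (∀ i, i < N → x i < x (i + 1)) →
    x (k - 1) < α →
    α < x k →
    (∀ i ∈ Finset.Icc 1 N, ∀ j ∈ Finset.Icc 1 p,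
      x (i - 1) < g i j ∧ g i j < x i ∧ g i j ≠ α) →
    (∀ i ∈ Finset.Icc 1 N, ∀ j, 1 ≤ j → j < p → g i j < g i (j + 1)) →
    (∀ i ∈ Finset.Icc 1 N, ∀ j ∈ Finset.Icc 1 p, 0 < A i j) →
    (∀ i ∈ Finset.Icc 1 N, ∀ F : Polynomial ℝ, F.natDegree ≤ 2 * p - 1 →
      ∑ j ∈ Finset.Icc 1 p, A i j * F.eval (g i j)
        = ∫ t in (x (i - 1))..(x i), F.eval t / betaPW βm βp α t) →
    ∀ v : ℝ → ℝ, MemUT p N k a b α βm βp x v →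
    normTp N p x (pih N p βm βp α g A v)
      ≤ C * Real.sqrt (∫ t in a..b, ((deriv v t) ^ 2 + (v t) ^ 2))) := by
  refine ⟨√((min βm βp)⁻¹ * (1 + p * d ^ 2) * max βm βp), by positivity, ?_⟩
  intro N k a b α x g A hba hN _ hkN hab hx0 hxN hxmono hαl hαr hg _ hA hquad v hv
  have hx : StrictMonoOn x (Iic N) := strictMonoOn_Iic_of_lt_succ hxmono
  choose! P hPdeg hP using fun m (hm : m ∈ Finset.Icc 1 N) =>
    hv.exists_flux hp hβm.ne' hβp.ne' hx hkN hαl hαr hm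
  have htotal : ∑ m ∈ Finset.Icc 1 N, ∑ n ∈ Finset.Icc 1 p,
      A m n * (betaPW βm βp α (g m n) * deriv v (g m n)) = 0 := by
    rw [Finset.sum_congr rfl fun m hm => sum_mul_flux_eq hβm hβp (hx.sub_one_lt hm).le
      (hv.1.mono (hx0 ▸ hxN ▸ hx.monotoneOn.Icc_sub_one_subset hm)) (hP m hm) (hPdeg m hm)
      (hg m hm) (hquad m hm), Finset.sum_Icc_one_sub_pred (v <| x ·),
      hx0, hxN, hv.2.1, hv.2.2.1, sub_zero]
  have henergy : ∑ m ∈ Finset.Icc 1 N, ∑ n ∈ Finset.Icc 1 p,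
      A m n * (betaPW βm βp α (g m n) * deriv v (g m n)) ^ 2
        ≤ max βm βp * ∫ t in a..b, (deriv v t ^ 2 + v t ^ 2) := by
    grw [Finset.sum_le_sum fun m hm => sum_mul_flux_sq_le hβm hβp (hx.sub_one_lt hm).le
      (hP m hm) (hPdeg m hm) (hg m hm) (hquad m hm), ← Finset.mul_sum]
    rw [← hx0, ← hxN] at hab hv ⊢
    exact mul_le_mul_of_nonneg_left (sum_integral_le_integral_add_sq hab.le
      (fun m hm => (hP m hm).intervalIntegrable_deriv_sq (hx.sub_one_lt hm).le) hv.1)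
      (by positivity)
  have hnorm := normTpSq_prefixSum_le (y := fun m n => betaPW βm βp α (g m n) * deriv v (g m n))
    (fun m hm => hx.sub_one_lt hm) (fun i hi j hj => (hA i hi j hj).le)
    fun m hm => sum_weights_le hβm hβp (hx.sub_one_lt hm).le (hquad m hm)
  rw [hx0, hxN, hba] at hnorm
  rw [normTp, pih_eq_prefixSum hN htotal, ← Real.sqrt_mul (by positivity)]
  exact Real.sqrt_le_sqrt (hnorm.trans (by rw [mul_assoc _ (max βm βp)]; gcongr))

/-- there is a constant `C`, depending only on `p`, `β⁻`, `β⁺` and `b−a`, such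
that for every `v` in the immersed trial space `U_T`, `‖Π_h v‖_{T'} ≤ C ‖v‖₁`. -/
theorem stmt_8 (p : ℕ) (hp : 1 ≤ p) (βm βp d : ℝ)
    (hβm : 0 < βm) (hβp : 0 < βp) (hd : 0 < d) :
    ∃ C : ℝ, 0 < C ∧
    (∀ (N k : ℕ) (a b α : ℝ) (x : ℕ → ℝ) (g A : ℕ → ℕ → ℝ),
    b - a = d →
    1 ≤ N →
    1 ≤ k →
    k ≤ N →
    a < b →
    x 0 = a →
    x N = b →
    (∀ i, i < N → x i < x (i + 1)) →
    x (k - 1) < α →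
    α < x k →
    (∀ i ∈ Finset.Icc 1 N, ∀ j ∈ Finset.Icc 1 p,
      x (i - 1) < g i j ∧ g i j < x i ∧ g i j ≠ α) →
    (∀ i ∈ Finset.Icc 1 N, ∀ j, 1 ≤ j → j < p → g i j < g i (j + 1)) →
    (∀ i ∈ Finset.Icc 1 N, ∀ j ∈ Finset.Icc 1 p, 0 < A i j) →
    (∀ i ∈ Finset.Icc 1 N, ∀ F : Polynomial ℝ, F.natDegree ≤ 2 * p - 1 →
      ∑ j ∈ Finset.Icc 1 p, A i j * F.eval (g i j)
        = ∫ t in (x (i - 1))..(x i), F.eval t / betaPW βm βp α t) →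
    ∀ v : ℝ → ℝ, MemUT p N k a b α βm βp x v →
    normTp N p x (pih N p βm βp α g A v)
      ≤ C * Real.sqrt (∫ t in a..b, ((deriv v t) ^ 2 + (v t) ^ 2))) :=
  stmt_8_general p hp βm βp d hβm hβp
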